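/- Let N ≥ 1, let B be an abelian group, and let f : ℤ^N → B be a function of finite functional degree (i.e., fdeg(f) ≤ D for some D ∈ ℕ). Then for every d ∈ ℕ: fdeg(f) ≤ d if and only if Δ^n f(0) = 0 for every n ∈ ℕ^N with |n| > d. Consequently fdeg(f) = sup{ |n| : n ∈ ℕ^N, Δ^n f(0) ≠ 0 } (with sup ∅ := −∞). -/

import Mathlib

/-!
Let `S` generate `A` and call `Δ_{s_1} ⋯ Δ_{s_k} f` with all `s_i ∈ S` a generator
difference of `f`. Going down from a known degree bound `D`: if every generator
difference of length `> k` vanishes identically, then a generator difference of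
length `k` is killed by every `Δ_s`, `s ∈ S`, hence by every `Δ_a`, since the periods
of a function form a subgroup; so it is constant, equal to its value at one point.
Once all generator differences of length `≥ k` vanish, the same subgroup argument,
applied one difference at a time, shows that all differences of length `≥ k` vanish.
On `ℤ^N` with `S` the unit vectors, the generator differences are exactly the `Δ^n`
up to reordering, as the `Δ_a` commute.
-/

/-- The difference operator `Δ_a` sending `f` to `x ↦ f (x + a) - f x`. -/
def disc {A B : Type*} [AddCommGroup A] [AddCommGroup B] (a : A) (f : A → B) : A → B :=
  fun x => f (x + a) - f x

/-- Iterated difference operator `Δ_{a_1} ⋯ Δ_{a_k} f` along a list `[a_1, …, a_k]`. -/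
def multiDisc {A B : Type*} [AddCommGroup A] [AddCommGroup B] : List A → (A → B) → (A → B)
  | [], f => f
  | a :: l, f => disc a (multiDisc l f)

/-- `FdegLE f d` says that the functional degree of `f` is at most `d`, i.e. all
`(d+1)`-fold iterated differences of `f` vanish. -/
def FdegLE {A B : Type*} [AddCommGroup A] [AddCommGroup B] (f : A → B) (d : ℕ) : Prop :=
  ∀ l : List A, l.length = d + 1 → multiDisc l f = 0

/-- The multi-index iterated difference operator `Δ^n = Δ_1^{n_1} ⋯ Δ_N^{n_N}` on
functions `ℤ^N → B`, where `Δ_i = Δ_{e_i}` for the `i`-th standard basis vector. -/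
def deltaPow {B : Type*} [AddCommGroup B] {N : ℕ} (n : Fin N → ℕ) (f : (Fin N → ℤ) → B) :
    (Fin N → ℤ) → B :=
  ((List.ofFn fun i => (disc (Pi.single i (1 : ℤ)))^[n i]).foldr (· ∘ ·) id) f

/-- The functional degree `fdeg f ∈ {-∞} ∪ ℕ ∪ {∞}` of `f : A → B`, namely
the supremum of the lengths of lists `[a_1, …, a_k]` with `Δ_{a_1} ⋯ Δ_{a_k} f ≠ 0`
(with `sup ∅ = ⊥ = -∞`). -/
noncomputable def fdeg {A B : Type*} [AddCommGroup A] [AddCommGroup B] (f : A → B) :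
    WithBot ℕ∞ :=
  sSup {d : WithBot ℕ∞ | ∃ l : List A, multiDisc l f ≠ 0 ∧ (l.length : WithBot ℕ∞) = d}

section Disc

variable {A B : Type*} [AddCommGroup A] [AddCommGroup B]

lemma disc_eq_zero_iff {a : A} {g : A → B} : disc a g = 0 ↔ ∀ x, g (x + a) = g x := by
  simp only [funext_iff, disc, Pi.zero_apply, sub_eq_zero]

lemma disc_comm (a b : A) (g : A → B) : disc a (disc b g) = disc b (disc a g) := by
  funext x
  simp only [disc, add_right_comm x a b]
  abel

@[simp]
lemma disc_zero (a : A) : disc a (0 : A → B) = 0 := by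
  funext x
  simp [disc]

@[simp]
lemma multiDisc_zero (l : List A) : multiDisc l (0 : A → B) = 0 := by
  induction l with
  | nil => rfl
  | cons a l ih => simp [multiDisc, ih]

lemma multiDisc_append (l₁ l₂ : List A) (g : A → B) :
    multiDisc (l₁ ++ l₂) g = multiDisc l₁ (multiDisc l₂ g) := by
  induction l₁ with
  | nil => rfl
  | cons a l ih => simp only [List.cons_append, multiDisc, ih]

lemma multiDisc_disc (l : List A) (a : A) (g : A → B) :
    multiDisc l (disc a g) = disc a (multiDisc l g) := by
  induction l with
  | nil => rfl
  | cons b l ih => simp only [multiDisc, ih, disc_comm]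

lemma multiDisc_replicate (k : ℕ) (a : A) :
    multiDisc (B := B) (List.replicate k a) = (disc a)^[k] := by
  funext g
  induction k with
  | zero => rfl
  | succ k ih => rw [List.replicate_succ, multiDisc, ih, Function.iterate_succ_apply']

lemma multiDisc_flatten (L : List (List A)) (g : A → B) :
    multiDisc L.flatten g = (L.map multiDisc).foldr (· ∘ ·) id g := by
  induction L with
  | nil => rfl
  | cons l L ih => simp only [List.flatten_cons, multiDisc_append, ih, List.map_cons,
      List.foldr_cons, Function.comp_apply]

lemma multiDisc_perm {l₁ l₂ : List A} (h : l₁.Perm l₂) (g : A → B) :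
    multiDisc l₁ g = multiDisc l₂ g := by
  induction h with
  | nil => rfl
  | cons a _ ih => simp only [multiDisc, ih]
  | swap a b l => exact disc_comm b a _
  | trans _ _ ih₁ ih₂ => exact ih₁.trans ih₂

lemma FdegLE.multiDisc_eq_zero {f : A → B} {d : ℕ} (hf : FdegLE f d) {l : List A}
    (hl : d < l.length) : multiDisc l f = 0 := by
  rw [← List.take_append_drop (l.length - (d + 1)) l, multiDisc_append,
    hf _ (by rw [List.length_drop]; omega), multiDisc_zero]

lemma disc_eq_zero_of_closure_eq_top {S : Set A} (hS : AddSubgroup.closure S = ⊤) {g : A → B}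
    (hg : ∀ s ∈ S, disc s g = 0) (a : A) : disc a g = 0 := by
  refine AddSubgroup.closure_induction (p := fun a _ => disc a g = 0) hg ?_ ?_ ?_
    (hS ▸ AddSubgroup.mem_top a)
  · simp only [disc_eq_zero_iff, add_zero, implies_true]
  · intro a b _ _ ha hb
    rw [disc_eq_zero_iff] at ha hb ⊢
    intro x
    rw [← add_assoc, hb, ha]
  · intro a _ ha
    rw [disc_eq_zero_iff] at ha ⊢
    intro x
    rw [← ha (x + -a), neg_add_cancel_right]

lemma apply_eq_of_closure_eq_top {S : Set A} (hS : AddSubgroup.closure S = ⊤) {g : A → B}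
    (hg : ∀ s ∈ S, disc s g = 0) (x y : A) : g x = g y := by
  have := disc_eq_zero_iff.1 (disc_eq_zero_of_closure_eq_top hS hg (x - y)) y
  rwa [add_sub_cancel] at this

lemma multiDisc_eq_zero_of_closure_eq_top {S : Set A} (hS : AddSubgroup.closure S = ⊤)
    {f : A → B} {k : ℕ}
    (hf : ∀ l : List A, (∀ a ∈ l, a ∈ S) → k ≤ l.length → multiDisc l f = 0)
    {l : List A} (hl : k ≤ l.length) : multiDisc l f = 0 := by
  suffices ∀ l l' : List A, (∀ a ∈ l', a ∈ S) → k ≤ l.length + l'.length →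
      multiDisc l (multiDisc l' f) = 0 from this l [] (by simp) (by simpa using hl)
  intro l
  induction l with
  | nil => intro l' hl' hk; exact hf l' hl' (by simpa using hk)
  | cons a l ih =>
    intro l' hl' hk
    refine disc_eq_zero_of_closure_eq_top hS (fun s hs => ?_) a
    rw [← multiDisc_disc]
    exact ih (s :: l') (by simpa [hs] using hl') (by simp at hk ⊢; omega)

theorem multiDisc_eq_zero_of_apply_eq_zero {S : Set A} (hS : AddSubgroup.closure S = ⊤)
    {f : A → B} {D k : ℕ} (hf : FdegLE f D) (x₀ : A)
    (h₀ : ∀ l : List A, (∀ a ∈ l, a ∈ S) → k ≤ l.length → multiDisc l f x₀ = 0)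
    {l : List A} (hl : k ≤ l.length) : multiDisc l f = 0 := by
  refine multiDisc_eq_zero_of_closure_eq_top hS (fun l hlS hkl => ?_) hl
  suffices ∀ j l, (∀ a ∈ l, a ∈ S) → k ≤ l.length → D < l.length + j → multiDisc l f = 0 from
    this (D + 1) l hlS hkl (by omega)
  intro j
  induction j with
  | zero => intro l _ _ hD; exact hf.multiDisc_eq_zero hD
  | succ j ih =>
    intro l hlS hkl hD
    have hconst : ∀ s ∈ S, disc s (multiDisc l f) = 0 := fun s hs =>
      ih (s :: l) (by simpa [hs] using hlS) (by simp; omega) (by simp; omega)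
    funext x
    rw [apply_eq_of_closure_eq_top hS hconst x x₀]
    exact h₀ l hlS hkl

end Disc

section Lattice

variable {B : Type*} [AddCommGroup B] {N : ℕ}

lemma single_one_injective :
    Function.Injective fun i : Fin N => (Pi.single i 1 : Fin N → ℤ) := by
  intro i j h
  simpa [Pi.single_apply] using congrFun h i

lemma closure_range_single_one :
    AddSubgroup.closure (Set.range fun i : Fin N => (Pi.single i 1 : Fin N → ℤ)) = ⊤ := by
  refine eq_top_iff.2 fun a _ => ?_
  rw [← Finset.univ_sum_single a]
  refine sum_mem fun i _ => ?_
  rw [← mul_one (a i), ← smul_eq_mul, Pi.single_smul']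
  exact zsmul_mem (AddSubgroup.subset_closure (Set.mem_range_self i)) _

def deltaPowList (n : Fin N → ℕ) : List (Fin N → ℤ) :=
  (List.ofFn fun i => List.replicate (n i) (Pi.single i 1)).flatten

lemma length_deltaPowList (n : Fin N → ℕ) : (deltaPowList n).length = ∑ i, n i := by
  simp [deltaPowList, List.length_flatten, List.map_ofFn, Function.comp_def, List.sum_ofFn]

lemma deltaPow_eq_multiDisc (n : Fin N → ℕ) (f : (Fin N → ℤ) → B) :
    deltaPow n f = multiDisc (deltaPowList n) f := by
  simp only [deltaPow, deltaPowList, multiDisc_flatten, List.map_ofFn, Function.comp_def,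
    multiDisc_replicate]

lemma count_deltaPowList (n : Fin N → ℕ) (x : Fin N → ℤ) :
    (deltaPowList n).count x = ∑ i, if Pi.single i 1 = x then n i else 0 := by
  simp [deltaPowList, List.count_flatten, List.map_ofFn, Function.comp_def, List.sum_ofFn,
    List.count_replicate]

lemma perm_deltaPowList_count {l : List (Fin N → ℤ)}
    (hl : ∀ a ∈ l, a ∈ Set.range fun i : Fin N => (Pi.single i 1 : Fin N → ℤ)) :
    l.Perm (deltaPowList fun i => l.count (Pi.single i 1)) := by
  refine List.perm_iff_count.2 fun x => ?_
  rw [count_deltaPowList]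
  by_cases hx : x ∈ Set.range fun i : Fin N => (Pi.single i 1 : Fin N → ℤ)
  · obtain ⟨j, rfl⟩ := hx
    simp [single_one_injective.eq_iff]
  · rw [List.count_eq_zero.2 fun h => hx (hl x h)]
    exact (Finset.sum_eq_zero fun i _ => if_neg fun h => hx ⟨i, h⟩).symm

theorem multiDisc_eq_zero_of_deltaPow_apply_zero {f : (Fin N → ℤ) → B} {D k : ℕ}
    (hf : FdegLE f D) (h₀ : ∀ n : Fin N → ℕ, k ≤ ∑ i, n i → deltaPow n f 0 = 0)
    {l : List (Fin N → ℤ)} (hl : k ≤ l.length) : multiDisc l f = 0 := by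
  refine multiDisc_eq_zero_of_apply_eq_zero closure_range_single_one hf 0
    (fun l hlS hkl => ?_) hl
  have hperm := perm_deltaPowList_count hlS
  rw [multiDisc_perm hperm, ← deltaPow_eq_multiDisc]
  exact h₀ _ (by rwa [← length_deltaPowList, ← hperm.length_eq])

lemma FdegLE.deltaPow_eq_zero {f : (Fin N → ℤ) → B} {d : ℕ} (hf : FdegLE f d)
    {n : Fin N → ℕ} (hn : d < ∑ i, n i) : deltaPow n f = 0 := by
  rw [deltaPow_eq_multiDisc]
  exact hf.multiDisc_eq_zero (by rwa [length_deltaPowList])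

end Lattice

theorem fdeg_eq_sup_deltaPow_apply_zero_ne_zero_general
    (N : ℕ) {B : Type*} [AddCommGroup B] (f : (Fin N → ℤ) → B)
    (hfin : ∃ D : ℕ, FdegLE f D) :
    (∀ d : ℕ, FdegLE f d ↔ ∀ n : Fin N → ℕ, d < ∑ i, n i → deltaPow n f 0 = 0) ∧
    fdeg f = sSup {d : WithBot ℕ∞ |
      ∃ n : Fin N → ℕ, deltaPow n f 0 ≠ 0 ∧ ((∑ i, n i : ℕ) : WithBot ℕ∞) = d} := by
  obtain ⟨D, hD⟩ := hfin
  refine ⟨fun d => ⟨fun hd n hn => by rw [hd.deltaPow_eq_zero hn, Pi.zero_apply],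
    fun h₀ l hl => multiDisc_eq_zero_of_deltaPow_apply_zero hD h₀ hl.ge⟩, le_antisymm ?_ ?_⟩
  · refine sSup_le ?_
    rintro _ ⟨l, hl, rfl⟩
    obtain ⟨n, hln, hn⟩ : ∃ n : Fin N → ℕ, l.length ≤ ∑ i, n i ∧ deltaPow n f 0 ≠ 0 := by
      by_contra! h
      exact hl (multiDisc_eq_zero_of_deltaPow_apply_zero hD h le_rfl)
    exact le_sSup_of_le ⟨n, hn, rfl⟩ (by exact_mod_cast hln)
  · refine sSup_le ?_
    rintro _ ⟨n, hn, rfl⟩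
    refine le_sSup ⟨deltaPowList n, fun h => hn ?_, by rw [length_deltaPowList]⟩
    rw [deltaPow_eq_multiDisc, h, Pi.zero_apply]

/-- **Localized computation of the functional degree.** Let `f : ℤ^N → B` have finite
functional degree. Then for every `d ∈ ℕ`, `fdeg f ≤ d` iff `Δ^n f (0) = 0` for every
multi-index `n` with `|n| > d`; consequently
`fdeg f = sup { |n| : n ∈ ℕ^N, Δ^n f (0) ≠ 0 }` (with `sup ∅ = -∞`). -/
theorem fdeg_eq_sup_deltaPow_apply_zero_ne_zero
    (N : ℕ) (hN : 1 ≤ N) {B : Type*} [AddCommGroup B] (f : (Fin N → ℤ) → B)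
    (hfin : ∃ D : ℕ, FdegLE f D) :
    (∀ d : ℕ, FdegLE f d ↔ ∀ n : Fin N → ℕ, d < ∑ i, n i → deltaPow n f 0 = 0) ∧
    fdeg f = sSup {d : WithBot ℕ∞ |
      ∃ n : Fin N → ℕ, deltaPow n f 0 ≠ 0 ∧ ((∑ i, n i : ℕ) : WithBot ℕ∞) = d} :=
  fdeg_eq_sup_deltaPow_apply_zero_ne_zero_general N f hfin
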